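/- arXiv:1902.05593 — 2 statements merged into one kernel-verified Lean document; each statement's English description precedes it below -/
import Mathlib

section
/- Let X be an n-dimensional smooth real Banach space and let {(e_i, e_i*) : i = 1,…,n} be an Auerbach basis of X. Then there exists ε > 0 such that the set A = {±e_i : i = 1,…,n} is a bounded and separated antipodal subset of the closed unit ball of X with constant d = 1 + ε; consequently H'_α(X) ≥ 2n. -/
/-! Smoothness of `X` makes the dual norm strictly convex: if unit functionals `g ≠ h` had
`‖g + h‖ = 2`, a unit vector norming `g + h` would be normed by both `g` and `h`. So for
`i ≠ j` the functional `s e_i* - t e_j*` separating `s e_i` from `t e_j` has norm `< 2`, while it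
takes the values `1` and `-1` at these points and stays in `[-1, 1]` on `A`; normalised, it
separates them with a gap `> 1` (for the antipodal pair `± e_i` the functional `e_i*` gives gap
`2`). As `A` is finite, these gaps exceed a common `1 + ε`. Finally `H'_α(X)` is a finite
supremum because a strictly antipodal subset of the sphere is `1`-separated, and `A` is such a
subset with `2n` points. -/

open Metric

noncomputable section

/-- `S` is a bounded and separated antipodal subset of `X` with constant `d`. -/
def IsBSA {X : Type*} [NormedAddCommGroup X] [NormedSpace ℝ X] (S : Set X) (d : ℝ) : Prop :=
  S ⊆ closedBall (0 : X) 1 ∧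
    ∀ x ∈ S, ∀ y ∈ S, x ≠ y → ∃ f : X →L[ℝ] ℝ, ‖f‖ ≤ 1 ∧
      d ≤ f x - f y ∧ ∀ z ∈ S, f y ≤ f z ∧ f z ≤ f x

/-- The strict antipodality condition (with gap `> 1`) entering the definition of the
strict antipodal Hadwiger number. -/
def StrictAntipProp {X : Type*} [NormedAddCommGroup X] [NormedSpace ℝ X] (S : Set X) : Prop :=
  ∀ x ∈ S, ∀ y ∈ S, x ≠ y → ∃ f : X →L[ℝ] ℝ, ‖f‖ ≤ 1 ∧
    1 < f x - f y ∧ ∀ z ∈ S, f y ≤ f z ∧ f z ≤ f x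

/-- The strict antipodal Hadwiger number `H'_α(X)`. -/
def strictHalpha (X : Type*) [NormedAddCommGroup X] [NormedSpace ℝ X] : ℕ :=
  sSup {k : ℕ | ∃ S : Finset X, S.card = k ∧ (S : Set X) ⊆ sphere (0 : X) 1 ∧
    StrictAntipProp (S : Set X)}

namespace ContinuousLinearMap

variable {X : Type*} [NormedAddCommGroup X] [NormedSpace ℝ X]

theorem exists_norm_eq_one_apply_eq_norm [ProperSpace X] [Nontrivial X] (φ : X →L[ℝ] ℝ) :
    ∃ x : X, ‖x‖ = 1 ∧ φ x = ‖φ‖ := by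
  obtain ⟨x, hx, hmax⟩ := ((isCompact_sphere (0 : X) 1).image
    (by fun_prop : Continuous fun x => ‖φ x‖)).sSup_mem
    ((NormedSpace.sphere_nonempty.mpr zero_le_one).image _)
  rw [sSup_sphere_eq_norm] at hmax
  beta_reduce at hmax
  rw [mem_sphere_zero_iff_norm] at hx
  rcases le_total 0 (φ x) with h | h
  · exact ⟨x, hx, by rw [← hmax, Real.norm_of_nonneg h]⟩
  · exact ⟨-x, by rwa [norm_neg], by rw [map_neg, ← hmax, Real.norm_of_nonpos h]⟩

end ContinuousLinearMap

open Topology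

namespace StrictAntipProp

variable {X : Type*} [NormedAddCommGroup X] [NormedSpace ℝ X] {S : Set X}

theorem one_lt_dist (hS : StrictAntipProp S) {x y : X} (hx : x ∈ S) (hy : y ∈ S) (hxy : x ≠ y) :
    1 < dist x y := by
  obtain ⟨φ, hφ, hgap, -⟩ := hS x hx y hy hxy
  calc 1 < φ x - φ y := hgap
    _ = φ (x - y) := (map_sub φ x y).symm
    _ ≤ ‖φ‖ * ‖x - y‖ := le_of_abs_le (φ.le_opNorm _)
    _ ≤ dist x y := by
      rw [dist_eq_norm]
      exact mul_le_of_le_one_left (norm_nonneg _) hφ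

theorem isSeparated (hS : StrictAntipProp S) : IsSeparated 1 S := fun x hx y hy hxy => by
  change 1 < edist x y
  rw [edist_dist, ENNReal.one_lt_ofReal]
  exact hS.one_lt_dist hx hy hxy

theorem exists_isBSA (hS : StrictAntipProp S) (hfin : S.Finite) (hball : S ⊆ closedBall 0 1) :
    ∃ ε > 0, IsBSA S (1 + ε) := by
  have hev : ∀ᶠ ε in 𝓝[>] (0 : ℝ), ∀ x ∈ S, ∀ y ∈ S, x ≠ y → ∃ φ : X →L[ℝ] ℝ, ‖φ‖ ≤ 1 ∧
      1 + ε ≤ φ x - φ y ∧ ∀ z ∈ S, φ y ≤ φ z ∧ φ z ≤ φ x := by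
    refine (Filter.eventually_all_finite hfin).2 fun x hx =>
      (Filter.eventually_all_finite hfin).2 fun y hy => ?_
    by_cases hxy : x = y
    · exact Filter.Eventually.of_forall fun _ h => absurd hxy h
    obtain ⟨φ, hφ, hgap, hord⟩ := hS x hx y hy hxy
    filter_upwards [nhdsWithin_le_nhds (eventually_lt_nhds (sub_pos.2 hgap))] with ε hε _
    exact ⟨φ, hφ, by linarith, hord⟩
  obtain ⟨ε, hε, hpos⟩ := (hev.and self_mem_nhdsWithin).exists
  exact ⟨ε, hpos, hball, hε⟩

end StrictAntipProp

section

variable {X : Type*} [NormedAddCommGroup X] [NormedSpace ℝ X]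

theorem strictConvexSpace_dual_of_smooth [ProperSpace X]
    (hsmooth : ∀ x : X, x ≠ 0 → ∃! g : X →L[ℝ] ℝ, ‖g‖ = 1 ∧ g x = ‖x‖) :
    StrictConvexSpace ℝ (X →L[ℝ] ℝ) := by
  refine StrictConvexSpace.of_norm_add_ne_two fun g h hg hh hne hsum => hne ?_
  have : Nontrivial X := by
    by_contra hX
    rw [not_nontrivial_iff_subsingleton] at hX
    simp [Subsingleton.elim g 0] at hg
  obtain ⟨x, hx, hgx⟩ := (g + h).exists_norm_eq_one_apply_eq_norm
  rw [hsum, add_apply] at hgx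
  have hg1 : g x ≤ 1 := by simpa [hg, hx] using le_of_abs_le (g.le_opNorm x)
  have hh1 : h x ≤ 1 := by simpa [hh, hx] using le_of_abs_le (h.le_opNorm x)
  have hx0 : x ≠ 0 := norm_ne_zero_iff.mp (by rw [hx]; exact one_ne_zero)
  exact (hsmooth x hx0).unique ⟨hg, by linarith⟩ ⟨hh, by linarith⟩

theorem exists_antipodal_of_norm_lt_sub {S : Set X} {x y : X} (g : X →L[ℝ] ℝ)
    (hg : ‖g‖ < g x - g y) (hS : ∀ z ∈ S, g y ≤ g z ∧ g z ≤ g x) :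
    ∃ φ : X →L[ℝ] ℝ, ‖φ‖ ≤ 1 ∧ 1 < φ x - φ y ∧ ∀ z ∈ S, φ y ≤ φ z ∧ φ z ≤ φ x := by
  have hpos : 0 < ‖g‖ := norm_pos_iff.mpr fun h => by simp [h] at hg
  refine ⟨‖g‖⁻¹ • g, ?_, ?_, fun z hz => ?_⟩
  · rw [norm_smul, norm_inv, norm_norm, inv_mul_cancel₀ hpos.ne']
  · simpa [← mul_sub, lt_inv_mul_iff₀ hpos] using hg
  · simp only [FunLike.coe_smul, Pi.smul_apply, smul_eq_mul]
    exact ⟨by gcongr; exact (hS z hz).1, by gcongr; exact (hS z hz).2⟩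

theorem bddAbove_card_strictAntip [ProperSpace X] :
    BddAbove {k : ℕ | ∃ S : Finset X, S.card = k ∧ (S : Set X) ⊆ sphere (0 : X) 1 ∧
      StrictAntipProp (S : Set X)} := by
  obtain ⟨N, -, hNfin, hN⟩ :=
    exists_finite_isCover_of_isCompact (ε := 1 / 2) (by norm_num) (isCompact_sphere (0 : X) 1)
  refine ⟨N.ncard, ?_⟩
  rintro _ ⟨S, rfl, hsph, hS⟩
  have : (S : Set X).encard ≤ N.encard :=
    calc (S : Set X).encard ≤ packingNumber (2 * (1 / 2)) (sphere (0 : X) 1) := by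
          rw [mul_one_div_cancel two_ne_zero]
          exact hS.isSeparated.encard_le_packingNumber hsph
      _ ≤ externalCoveringNumber (1 / 2) (sphere (0 : X) 1) :=
          packingNumber_two_mul_le_externalCoveringNumber _ _
      _ ≤ N.encard := hN.externalCoveringNumber_le_encard
  rw [← hNfin.cast_ncard_eq, Set.encard_coe_eq_coe_finsetCard] at this
  exact_mod_cast this

theorem ncard_le_strictHalpha [ProperSpace X] {S : Set X} (hfin : S.Finite)
    (hsph : S ⊆ sphere 0 1) (hS : StrictAntipProp S) : S.ncard ≤ strictHalpha X := by
  refine le_csSup bddAbove_card_strictAntip ⟨hfin.toFinset, ?_, ?_, ?_⟩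
  · exact (Set.ncard_eq_toFinset_card S hfin).symm
  · simpa using hsph
  · simpa using hS

end

section Auerbach

variable {X : Type*} [NormedAddCommGroup X] {ι : Type*} {b : ι → X}

theorem range_union_range_neg_subset_sphere (hb : ∀ i, ‖b i‖ = 1) :
    Set.range b ∪ Set.range (fun i => -b i) ⊆ sphere 0 1 := by
  rintro _ (⟨i, rfl⟩ | ⟨i, rfl⟩) <;> simp [hb]

variable [NormedSpace ℝ X]

theorem mem_range_union_range_neg_iff {z : X} :
    z ∈ Set.range b ∪ Set.range (fun i => -b i) ↔
      ∃ i, ∃ s : ℝ, (s = 1 ∨ s = -1) ∧ z = s • b i := by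
  constructor
  · rintro (⟨i, rfl⟩ | ⟨i, rfl⟩)
    · exact ⟨i, 1, Or.inl rfl, (one_smul ℝ _).symm⟩
    · exact ⟨i, -1, Or.inr rfl, (neg_one_smul ℝ _).symm⟩
  · rintro ⟨i, s, rfl | rfl, rfl⟩
    · exact Or.inl ⟨i, (one_smul ℝ _).symm⟩
    · exact Or.inr ⟨i, (neg_one_smul ℝ _).symm⟩

theorem le_apply_and_apply_le_of_abs_apply_le_one {g : X →L[ℝ] ℝ} (hg : ∀ k, |g (b k)| ≤ 1)
    {x y : X} (hx : g x = 1) (hy : g y = -1) :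
    ∀ z ∈ Set.range b ∪ Set.range (fun i => -b i), g y ≤ g z ∧ g z ≤ g x := by
  rintro _ (⟨k, rfl⟩ | ⟨k, rfl⟩) <;> rw [hx, hy]
  · exact abs_le.1 (hg k)
  · rw [map_neg, neg_le_neg_iff, neg_le]
    exact (abs_le.1 (hg k)).symm

variable [DecidableEq ι] {f : ι → X →L[ℝ] ℝ}

theorem ncard_range_union_range_neg [Finite ι]
    (hbf : ∀ i j, f i (b j) = if i = j then 1 else 0) :
    (Set.range b ∪ Set.range (fun i => -b i)).ncard = 2 * Nat.card ι := by
  have hinj : Function.Injective b := fun i j h => by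
    simpa [hbf] using congrArg (f i) h
  have hdisj : Disjoint (Set.range b) (Set.range fun i => -b i) := by
    refine Set.disjoint_left.2 ?_
    rintro _ ⟨i, rfl⟩ ⟨j, hj⟩
    have := congrArg (f i) hj
    simp only [map_neg, hbf] at this
    split_ifs at this <;> norm_num at this
  rw [Set.ncard_union_eq hdisj, Set.ncard_range_of_injective hinj,
    Set.ncard_range_of_injective (f := fun i => -b i) (neg_injective.comp hinj), two_mul]

theorem exists_functional_of_auerbach [StrictConvexSpace ℝ (X →L[ℝ] ℝ)]
    (hf : ∀ i, ‖f i‖ = 1) (hbf : ∀ i j, f i (b j) = if i = j then 1 else 0) {x y : X}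
    (hx : x ∈ Set.range b ∪ Set.range (fun i => -b i))
    (hy : y ∈ Set.range b ∪ Set.range (fun i => -b i)) (hxy : x ≠ y) :
    ∃ g : X →L[ℝ] ℝ, ‖g‖ < 2 ∧ (∀ k, |g (b k)| ≤ 1) ∧ g x = 1 ∧ g y = -1 := by
  rw [mem_range_union_range_neg_iff] at hx hy
  obtain ⟨i, s, hs, rfl⟩ := hx
  obtain ⟨j, t, ht, rfl⟩ := hy
  have hnorm : ∀ {u : ℝ}, (u = 1 ∨ u = -1) → ∀ k, ‖u • f k‖ = 1 := by
    rintro u hu k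
    rw [norm_smul, hf, mul_one]
    rcases hu with rfl | rfl <;> norm_num
  have hs2 : s * s = 1 := by rcases hs with rfl | rfl <;> norm_num
  have ht2 : t * t = 1 := by rcases ht with rfl | rfl <;> norm_num
  by_cases hij : i = j
  · subst hij
    have hts : t = -s := by
      rcases hs with rfl | rfl <;> rcases ht with rfl | rfl <;> simp_all
    refine ⟨s • f i, by rw [hnorm hs]; norm_num, fun k => ?_, ?_, ?_⟩
    · rcases hs with rfl | rfl <;> by_cases hik : i = k <;> simp [hbf, hik]
    · simp [hbf, hs2]
    · simp [hbf, hts, hs2]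
  · refine ⟨s • f i - t • f j, ?_, fun k => ?_, ?_, ?_⟩
    · have hne : s • f i ≠ -(t • f j) := fun h => by
        have := congrArg (· (b i)) h
        rcases hs with rfl | rfl <;> simp [hbf, Ne.symm hij] at this
      calc ‖s • f i - t • f j‖ = ‖s • f i + -(t • f j)‖ := by rw [sub_eq_add_neg]
        _ < ‖s • f i‖ + ‖-(t • f j)‖ := norm_add_lt_of_not_sameRay fun h =>
          hne ((sameRay_iff_of_norm_eq (by rw [norm_neg, hnorm hs, hnorm ht])).1 h)
        _ = 2 := by rw [norm_neg, hnorm hs, hnorm ht]; norm_num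
    · rcases hs with rfl | rfl <;> rcases ht with rfl | rfl <;> by_cases hik : i = k <;>
        by_cases hjk : j = k <;> simp_all
    · simp [hbf, Ne.symm hij, hs2]
    · simp [hbf, hij, ht2]

theorem strictAntipProp_range_union_range_neg [StrictConvexSpace ℝ (X →L[ℝ] ℝ)]
    (hf : ∀ i, ‖f i‖ = 1) (hbf : ∀ i j, f i (b j) = if i = j then 1 else 0) :
    StrictAntipProp (Set.range b ∪ Set.range (fun i => -b i)) := fun x hx y hy hxy => by
  obtain ⟨g, hg, hgb, hgx, hgy⟩ := exists_functional_of_auerbach hf hbf hx hy hxy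
  refine exists_antipodal_of_norm_lt_sub g ?_
    (le_apply_and_apply_le_of_abs_apply_le_one hgb hgx hgy)
  rw [hgx, hgy]
  linarith

end Auerbach

theorem smooth_auerbach_pm_isBSA_general (n : ℕ) (X : Type*) [NormedAddCommGroup X] [NormedSpace ℝ X]
    [FiniteDimensional ℝ X]
    (hsmooth : ∀ x : X, x ≠ 0 → ∃! g : X →L[ℝ] ℝ, ‖g‖ = 1 ∧ g x = ‖x‖)
    (b : Module.Basis (Fin n) ℝ X) (f : Fin n → (X →L[ℝ] ℝ))
    (hb : ∀ i, ‖b i‖ = 1) (hf : ∀ i, ‖f i‖ = 1)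
    (hbf : ∀ i j, f i (b j) = if i = j then 1 else 0)
    (A : Set X) (hA : A = Set.range (fun i => b i) ∪ Set.range (fun i => -(b i))) :
    ∃ ε : ℝ, 0 < ε ∧ IsBSA A (1 + ε) ∧ 2 * n ≤ strictHalpha X := by
  subst hA
  have := strictConvexSpace_dual_of_smooth hsmooth
  have hS := strictAntipProp_range_union_range_neg hf hbf
  have hfin := (Set.finite_range b).union (Set.finite_range fun i => -b i)
  have hsph := range_union_range_neg_subset_sphere hb
  obtain ⟨ε, hε, hBSA⟩ := hS.exists_isBSA hfin (hsph.trans sphere_subset_closedBall)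
  refine ⟨ε, hε, hBSA, ?_⟩
  simpa [ncard_range_union_range_neg hbf] using ncard_le_strictHalpha hfin hsph hS

/-- If `X` is an `n`-dimensional smooth real Banach space (every nonzero
point has a unique norm-one support functional) and `{(b i, f i)}` is an Auerbach basis of
`X`, then for some `ε > 0` the set `A = {± b i}` is a bounded and separated antipodal
subset of the closed unit ball with constant `d = 1 + ε`; consequently `H'_α(X) ≥ 2n`. -/
theorem smooth_auerbach_pm_isBSA (n : ℕ) (X : Type*) [NormedAddCommGroup X] [NormedSpace ℝ X]
    [FiniteDimensional ℝ X] (hdim : Module.finrank ℝ X = n)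
    (hsmooth : ∀ x : X, x ≠ 0 → ∃! g : X →L[ℝ] ℝ, ‖g‖ = 1 ∧ g x = ‖x‖)
    (b : Module.Basis (Fin n) ℝ X) (f : Fin n → (X →L[ℝ] ℝ))
    (hb : ∀ i, ‖b i‖ = 1) (hf : ∀ i, ‖f i‖ = 1)
    (hbf : ∀ i j, f i (b j) = if i = j then 1 else 0)
    (A : Set X) (hA : A = Set.range (fun i => b i) ∪ Set.range (fun i => -(b i))) :
    ∃ ε : ℝ, 0 < ε ∧ IsBSA A (1 + ε) ∧ 2 * n ≤ strictHalpha X :=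
  smooth_auerbach_pm_isBSA_general n X hsmooth b f hb hf hbf A hA

end
end

section
/- Let n ≥ 2 and 1 < p < ∞ with p ≥ log₂ n. Then H_α(ℓ_p^n) = 2^n; in particular the set S' = n^{-1/p}·{−1,1}^n is a bounded and separated antipodal subset of the unit sphere of ℓ_p^n of cardinality 2^n with constant d = 2/n^{1/p} ≥ 1. -/
open Metric
open scoped Classical

noncomputable section

/-- The antipodality condition (with gap `1`). -/
def AntipProp {X : Type*} [NormedAddCommGroup X] [NormedSpace ℝ X] (S : Set X) : Prop :=
  ∀ x ∈ S, ∀ y ∈ S, x ≠ y → ∃ f : X →L[ℝ] ℝ, ‖f‖ ≤ 1 ∧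
    1 ≤ f x - f y ∧ ∀ z ∈ S, f y ≤ f z ∧ f z ≤ f x

/-- The antipodal Hadwiger number `H_α(X)`. -/
def Halpha (X : Type*) [NormedAddCommGroup X] [NormedSpace ℝ X] : ℕ :=
  sSup {k : ℕ | ∃ S : Finset X, S.card = k ∧ (S : Set X) ⊆ sphere (0 : X) 1 ∧
    AntipProp (S : Set X)}

/-! The scaled sign vectors `n^{-1/p} ε`, `ε ∈ {±1}^n`, lie on the unit sphere of `ℓ_p^n`, and two
of them differing in the coordinate `i` are separated by `±eᵢ*`, a functional of norm `1`, with
gap `2 n^{-1/p}`; this gap is at least `1` exactly when `n ≤ 2^p`. Hence `H_α(ℓ_p^n) ≥ 2^n`.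

The matching upper bound is the Danzer–Grünbaum bound, valid in every `n`-dimensional space: if
`S` is (weakly) antipodal with full affine span and `K = conv S`, the half-size copies
`(K + x)/2`, `x ∈ S`, lie in `K` and two of them meet only inside the hyperplane
`f = (f x + f y)/2` of a functional separating `x` and `y`, so `|S| 2^{-n} vol K ≤ vol K`.
A set with smaller affine span is translated into its vector span, of smaller dimension. -/

open MeasureTheory Set Module AffineMap
open scoped ENNReal

section WeaklyAntipodal

variable {E : Type*} [AddCommGroup E] [Module ℝ E]

def IsWeaklyAntipodal (S : Set E) : Prop :=
  ∀ x ∈ S, ∀ y ∈ S, x ≠ y → ∃ f : E →ₗ[ℝ] ℝ, f y < f x ∧ ∀ z ∈ S, f y ≤ f z ∧ f z ≤ f x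

theorem IsWeaklyAntipodal.preimage {F : Type*} [AddCommGroup F] [Module ℝ F] {S : Set E}
    (hS : IsWeaklyAntipodal S) {g : F →ᵃ[ℝ] E} (hg : Function.Injective g) :
    IsWeaklyAntipodal (g ⁻¹' S) := by
  intro x hx y hy hxy
  obtain ⟨f, hlt, hf⟩ := hS _ hx _ hy (hg.ne hxy)
  have hfg : ∀ z, f (g.linear z) = f (g z) - f (g 0) := fun z => by
    rw [← map_sub, ← vsub_eq_sub, ← g.linearMap_vsub, vsub_eq_sub, sub_zero]
  refine ⟨f ∘ₗ g.linear, ?_, fun z hz => ?_⟩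
  · simp only [LinearMap.comp_apply, hfg]
    linarith
  · simp only [LinearMap.comp_apply, hfg]
    constructor <;> linarith [hf _ hz]

theorem image_homothety_half_inter_subset_preimage {f : E →ₗ[ℝ] ℝ} {K : Set E} {x y : E}
    (hK : ∀ z ∈ K, f y ≤ f z ∧ f z ≤ f x) :
    homothety x (1 / 2 : ℝ) '' K ∩ homothety y (1 / 2 : ℝ) '' K ⊆ f ⁻¹' {(f x + f y) / 2} := by
  have hf : ∀ c z, f (homothety c (1 / 2 : ℝ) z) = (f c + f z) / 2 := fun c z => by
    simp only [homothety_apply, vsub_eq_sub, vadd_eq_add, map_add, map_smul, map_sub,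
      smul_eq_mul]
    ring
  rintro _ ⟨⟨a, ha, rfl⟩, ⟨b, hb, hba⟩⟩
  have hfb := hf y b
  rw [hba] at hfb
  simp only [mem_preimage, mem_singleton_iff]
  linarith [hf x a, hK a ha, hK b hb]

end WeaklyAntipodal

section Volume

variable {E : Type*} [NormedAddCommGroup E] [NormedSpace ℝ E] [FiniteDimensional ℝ E]

theorem addHaar_preimage_singleton_eq_zero [MeasurableSpace E] [BorelSpace E] (μ : Measure E)
    [μ.IsAddHaarMeasure] {f : E →ₗ[ℝ] ℝ} {x : E} {c : ℝ} (hx : f x ≠ c) :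
    μ (f ⁻¹' {c}) = 0 := by
  have hA : f ⁻¹' {c} = ((affineSpan ℝ {c}).comap f.toAffineMap : Set E) := by simp
  rw [hA]
  refine Measure.addHaar_affineSubspace μ _ fun htop => hx ?_
  have hmem : x ∈ (affineSpan ℝ {c}).comap f.toAffineMap := htop ▸ AffineSubspace.mem_top ℝ E x
  simpa using hmem

theorem IsWeaklyAntipodal.card_le_of_affineSpan_eq_top {S : Finset E}
    (hS : IsWeaklyAntipodal (S : Set E)) (hspan : affineSpan ℝ (S : Set E) = ⊤) :
    S.card ≤ 2 ^ finrank ℝ E := by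
  borelize E
  set μ : Measure E := Measure.addHaar
  set K := convexHull ℝ (S : Set E)
  set T : E → Set E := fun x => homothety x (1 / 2 : ℝ) '' K
  have hK : Convex ℝ K := convex_convexHull ℝ _
  have hKpos : μ K ≠ 0 := by
    refine (μ.measure_pos_of_nonempty_interior ?_).ne'
    rwa [hK.interior_nonempty_iff_affineSpan_eq_top, affineSpan_convexHull]
  have hKfin : μ K ≠ ⊤ := (S.finite_toSet.isCompact_convexHull ℝ).measure_lt_top.ne
  have hTK : ∀ x ∈ S, T x ⊆ K := by
    rintro x hx _ ⟨z, hz, rfl⟩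
    rw [homothety_eq_lineMap]
    exact hK.lineMap_mem (subset_convexHull ℝ _ hx) hz ⟨by norm_num, by norm_num⟩
  have hTμ : ∀ x, 2 ^ finrank ℝ E * μ (T x) = μ K := fun x => by
    rw [Measure.addHaar_image_homothety, abs_of_nonneg (by positivity), ← mul_assoc,
      one_div, inv_pow, ENNReal.ofReal_inv_of_pos (by positivity), ENNReal.ofReal_pow zero_le_two,
      ENNReal.ofReal_ofNat, ENNReal.mul_inv_cancel (by positivity) (by simp), one_mul]
  have hdisj : (S : Set E).Pairwise (Function.onFun (AEDisjoint μ) T) := by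
    intro x hx y hy hxy
    obtain ⟨f, hlt, hf⟩ := hS x hx y hy hxy
    have hKf : ∀ z ∈ K, f y ≤ f z ∧ f z ≤ f x := fun z hz =>
      convexHull_min (fun z hz => hf z hz) ((convex_Icc _ _).linear_preimage f) hz
    exact measure_mono_null (image_homothety_half_inter_subset_preimage hKf)
      (addHaar_preimage_singleton_eq_zero μ (x := x) (by linarith))
  have hcard : (S.card : ENNReal) * μ K ≤ 2 ^ finrank ℝ E * μ K :=
    calc (S.card : ENNReal) * μ K = 2 ^ finrank ℝ E * ∑ x ∈ S, μ (T x) := by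
          rw [Finset.mul_sum, Finset.sum_congr rfl fun x _ => hTμ x, Finset.sum_const,
            nsmul_eq_mul]
      _ = 2 ^ finrank ℝ E * μ (⋃ x ∈ S, T x) := by
          rw [measure_biUnion_finset₀ hdisj fun x _ =>
            ((S.finite_toSet.isCompact_convexHull ℝ).image
              (homothety_continuous x _)).isClosed.measurableSet.nullMeasurableSet]
      _ ≤ 2 ^ finrank ℝ E * μ K := by gcongr; exact iUnion₂_subset hTK
  exact_mod_cast (ENNReal.mul_le_mul_iff_left hKpos hKfin).1 hcard

theorem IsWeaklyAntipodal.card_le {S : Finset E} (hS : IsWeaklyAntipodal (S : Set E)) :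
    S.card ≤ 2 ^ finrank ℝ E := by
  induction hd : finrank ℝ E using Nat.strong_induction_on generalizing E with
  | _ d ih =>
  subst hd
  by_cases hspan : affineSpan ℝ (S : Set E) = ⊤
  · exact hS.card_le_of_affineSpan_eq_top hspan
  obtain rfl | ⟨s₀, hs₀⟩ := S.eq_empty_or_nonempty
  · simp
  set V := vectorSpan ℝ (S : Set E)
  have hV : V ≠ ⊤ := fun h => hspan
    ((AffineSubspace.affineSpan_eq_top_iff_vectorSpan_eq_top_of_nonempty ℝ E E ⟨s₀, hs₀⟩).2 h)
  let g : V →ᵃ[ℝ] E := V.subtype.toAffineMap + AffineMap.const ℝ V s₀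
  have hg : Function.Injective g := fun a b h => Subtype.ext (add_right_cancel h)
  have hSg : ∀ z ∈ S, z ∈ range g := fun z hz =>
    ⟨⟨z - s₀, vsub_mem_vectorSpan ℝ hz hs₀⟩, sub_add_cancel z s₀⟩
  calc S.card = (S.preimage g hg.injOn).card := by
        rw [Finset.card_preimage, Finset.filter_true_of_mem hSg]
    _ ≤ 2 ^ finrank ℝ V :=
        ih _ (Submodule.finrank_lt hV) (by simpa using hS.preimage hg) rfl
    _ ≤ 2 ^ finrank ℝ E := pow_le_pow_right₀ one_le_two (Submodule.finrank_le V)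

end Volume

section Halpha

variable {X : Type*} [NormedAddCommGroup X] [NormedSpace ℝ X]

theorem AntipProp.isWeaklyAntipodal {S : Set X} (hS : AntipProp S) : IsWeaklyAntipodal S :=
  fun x hx y hy hxy =>
    let ⟨f, _, hgap, hf⟩ := hS x hx y hy hxy
    ⟨f, by simp only [ContinuousLinearMap.coe_coe]; linarith, by simpa using hf⟩

theorem IsBSA.antipProp {S : Set X} {d : ℝ} (hS : IsBSA S d) (hd : 1 ≤ d) : AntipProp S :=
  fun x hx y hy hxy =>
    let ⟨f, hf1, hgap, hf⟩ := hS.2 x hx y hy hxy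
    ⟨f, hf1, hd.trans hgap, hf⟩

variable [FiniteDimensional ℝ X]

theorem Halpha_le_two_pow_finrank : Halpha X ≤ 2 ^ finrank ℝ X :=
  csSup_le' fun _ ⟨_, hcard, _, hS⟩ => hcard ▸ hS.isWeaklyAntipodal.card_le

theorem card_le_Halpha {S : Finset X} (hS1 : (S : Set X) ⊆ sphere 0 1)
    (hS : AntipProp (S : Set X)) : S.card ≤ Halpha X :=
  le_csSup ⟨_, fun _ ⟨_, hcard, _, hT⟩ => hcard ▸ hT.isWeaklyAntipodal.card_le⟩ ⟨S, rfl, hS1, hS⟩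

end Halpha

section SignVector

variable {ι : Type*} (p : ℝ≥0∞)

def signVector (c : ℝ) (σ : ι → Bool) : PiLp p (fun _ : ι => ℝ) :=
  (WithLp.equiv p (ι → ℝ)).symm (fun i => (if σ i then 1 else -1) * c)

variable {p}

theorem signVector_apply (c : ℝ) (σ : ι → Bool) (i : ι) :
    signVector p c σ i = (if σ i then 1 else -1) * c := rfl

theorem norm_signVector_apply (c : ℝ) (σ : ι → Bool) (i : ι) :
    ‖signVector p c σ i‖ = ‖c‖ := by
  rw [signVector_apply]
  cases σ i <;> simp

theorem signVector_injective {c : ℝ} (hc : c ≠ 0) :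
    Function.Injective (signVector (ι := ι) p c) := by
  intro σ τ h
  funext i
  have hi := congrArg (· i) h
  simp only [signVector_apply, mul_left_inj' hc] at hi
  revert hi
  cases σ i <;> cases τ i <;> norm_num

theorem smul_proj_signVector (c : ℝ) (σ ρ : ι → Bool) (i : ι) :
    ((if σ i then 1 else -1 : ℝ) • PiLp.proj (𝕜 := ℝ) p (fun _ : ι => ℝ) i) (signVector p c ρ) =
      if ρ i = σ i then c else -c := by
  simp only [smul_apply, PiLp.proj_apply, signVector_apply, smul_eq_mul]
  cases σ i <;> cases ρ i <;> simp

variable [Fintype ι] [Fact (1 ≤ p)]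

theorem norm_signVector (hp : p ≠ ∞) (c : ℝ) (σ : ι → Bool) :
    ‖signVector p c σ‖ = (Fintype.card ι : ℝ) ^ (1 / p.toReal) * |c| := by
  have hp0 : 0 < p.toReal :=
    ENNReal.toReal_pos (zero_lt_one.trans_le Fact.out).ne' hp
  calc ‖signVector p c σ‖ = ‖WithLp.toLp p (Function.const ι c)‖ := by
        simp only [PiLp.norm_eq_sum hp0, norm_signVector_apply,
          Function.const_apply]
    _ = _ := by
        rw [PiLp.norm_toLp_const hp, one_div, ENNReal.toReal_inv, Real.norm_eq_abs, one_div]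
        rfl

theorem exists_dual_separating_signVector {c : ℝ} (hc : 0 ≤ c) {σ τ : ι → Bool}
    (hστ : σ ≠ τ) : ∃ f : PiLp p (fun _ : ι => ℝ) →L[ℝ] ℝ, ‖f‖ ≤ 1 ∧
      f (signVector p c σ) - f (signVector p c τ) = 2 * c ∧
      ∀ ρ, f (signVector p c τ) ≤ f (signVector p c ρ) ∧
        f (signVector p c ρ) ≤ f (signVector p c σ) := by
  obtain ⟨i, hi⟩ := Function.ne_iff.1 hστ
  refine ⟨(if σ i then 1 else -1 : ℝ) • PiLp.proj (𝕜 := ℝ) p (fun _ : ι => ℝ) i, ?_, ?_,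
    fun ρ => ?_⟩
  · refine ContinuousLinearMap.opNorm_le_bound _ zero_le_one fun z => ?_
    rw [one_mul]
    cases σ i <;> simpa using PiLp.norm_apply_le z i
  · simp only [smul_proj_signVector, if_neg (Ne.symm hi), if_true]
    ring
  · simp only [smul_proj_signVector, if_neg (Ne.symm hi), if_true]
    split_ifs <;> constructor <;> linarith

theorem isBSA_image_signVector [DecidableEq ι] {c : ℝ} (hc : 0 ≤ c)
    (hc1 : ∀ σ : ι → Bool, ‖signVector p c σ‖ ≤ 1) :
    IsBSA (↑(Finset.image (signVector (ι := ι) p c) Finset.univ) : Set (PiLp p fun _ : ι => ℝ))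
      (2 * c) := by
  simp only [Finset.coe_image, Finset.coe_univ, image_univ]
  refine ⟨?_, ?_⟩
  · rintro _ ⟨σ, rfl⟩
    exact mem_closedBall_zero_iff.2 (hc1 σ)
  · rintro _ ⟨σ, rfl⟩ _ ⟨τ, rfl⟩ hστ
    obtain ⟨f, hf1, hgap, hf⟩ :=
      exists_dual_separating_signVector (p := p) hc (ne_of_apply_ne _ hστ)
    exact ⟨f, hf1, hgap.ge, by simpa using hf⟩

end SignVector

/-- For `n ≥ 2` and `1 < p < ∞` with `p ≥ log₂ n`, one has
`H_α(ℓ_p^n) = 2^n`; moreover the scaled sign-vector set `S' = n^{-1/p}·{−1,1}^n` is a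
bounded and separated antipodal subset of the unit sphere of `ℓ_p^n` of cardinality
`2^n`, with constant `d = 2/n^{1/p} ≥ 1`. -/
theorem Halpha_lp_eq_of_logb_le (n : ℕ) (hn : 2 ≤ n) (p : ℝ) (hp : 1 < p)
    (hplog : Real.logb 2 n ≤ p) [Fact (1 ≤ ENNReal.ofReal p)]
    (S : Finset (PiLp (ENNReal.ofReal p) (fun _ : Fin n => ℝ)))
    (hS : S = Finset.image
      (fun σ : Fin n → Bool =>
        (WithLp.equiv (ENNReal.ofReal p) (∀ _ : Fin n, ℝ)).symm
          (fun i => (if σ i then 1 else -1) * ((n : ℝ) ^ (1 / p))⁻¹))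
      Finset.univ) :
    S.card = 2 ^ n ∧
    (S : Set (PiLp (ENNReal.ofReal p) (fun _ : Fin n => ℝ))) ⊆ sphere 0 1 ∧
    1 ≤ 2 / (n : ℝ) ^ (1 / p) ∧
    IsBSA (S : Set (PiLp (ENNReal.ofReal p) (fun _ : Fin n => ℝ))) (2 / (n : ℝ) ^ (1 / p)) ∧
    Halpha (PiLp (ENNReal.ofReal p) (fun _ : Fin n => ℝ)) = 2 ^ n := by
  have hp0 : 0 < p := zero_lt_one.trans hp
  have hn0 : (0 : ℝ) < n := by norm_cast; omega
  have hnp : (0 : ℝ) < (n : ℝ) ^ (1 / p) := by positivity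
  set c := ((n : ℝ) ^ (1 / p))⁻¹
  replace hS : S = Finset.image (signVector (ENNReal.ofReal p) c) Finset.univ := hS
  have hnorm (σ : Fin n → Bool) : ‖signVector (ENNReal.ofReal p) c σ‖ = 1 := by
    rw [norm_signVector ENNReal.ofReal_ne_top, ENNReal.toReal_ofReal hp0.le, Fintype.card_fin,
      abs_of_pos (inv_pos.2 hnp), mul_inv_cancel₀ hnp.ne']
  have hcard : S.card = 2 ^ n := by
    rw [hS, Finset.card_image_of_injective _ (signVector_injective (inv_ne_zero hnp.ne'))]
    simp
  have hsphere : (S : Set (PiLp (ENNReal.ofReal p) fun _ : Fin n => ℝ)) ⊆ sphere 0 1 := by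
    simp [hS, Set.subset_def, hnorm]
  have hd : 1 ≤ 2 / (n : ℝ) ^ (1 / p) := by
    rw [one_le_div hnp, one_div, Real.rpow_inv_le_iff_of_pos hn0.le zero_le_two hp0]
    exact (Real.logb_le_iff_le_rpow one_lt_two hn0).1 hplog
  have hbsa : IsBSA (S : Set (PiLp (ENNReal.ofReal p) fun _ : Fin n => ℝ))
      (2 / (n : ℝ) ^ (1 / p)) := by
    rw [hS, div_eq_mul_inv]
    exact isBSA_image_signVector (inv_pos.2 hnp).le fun σ => (hnorm σ).le
  refine ⟨hcard, hsphere, hd, hbsa, le_antisymm ?_ ?_⟩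
  · refine Halpha_le_two_pow_finrank.trans_eq ?_
    rw [(WithLp.linearEquiv _ ℝ (Fin n → ℝ)).finrank_eq, Module.finrank_fin_fun]
  · exact hcard ▸ card_le_Halpha hsphere (hbsa.antipProp hd)

end
end
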